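/- arXiv:1511.05540 — 3 statements merged into one kernel-verified Lean document; each statement's English description precedes it below -/
import Mathlib

section
/- Let R be a field, and let A ∈ M_n E^m have degree-zero component A₀ = diag(λ₁,…,λ_n) a diagonal matrix with pairwise distinct diagonal entries λ_i ∈ R, and degree-one component A₁ = (v_{ij}) with v_{ij} ∈ E^m_1. Let f(x) = ∏_{i=1}^n (x − λ_i) be the characteristic polynomial of A₀ and set B = f(A). Then the degree-one component B₁ of B equals the diagonal matrix diag(f'(λ₁)v₁₁, …, f'(λ_n)v_{nn}), where f' denotes the formal derivative of f. -/
/-!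
Write `A = D + V + (terms of degree ≥ 2)` with `D = diag(λ₁, …, λₙ)` scalar. Taking degree-zero
parts is a ring homomorphism, and the degree-one part of a product obeys the Leibniz rule
`(xy)₁ = x₀y₁ + x₁y₀`. Since `D` is scalar and diagonal, an induction on `p` (via `p ↦ X * p`)
shows that `p(A)₁` has entries `p'(λᵢ) vᵢᵢ` on the diagonal and
`(p(λᵢ) - p(λⱼ)) / (λᵢ - λⱼ) · vᵢⱼ` off it. For `p = f` both `f(λᵢ)` and `f(λⱼ)` vanish, so the
off-diagonal entries are zero as soon as `λᵢ ≠ λⱼ`.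
-/

open Polynomial DirectSum

theorem coe_decompose_add {ι A σ : Type*} [DecidableEq ι] [AddCommMonoid A] [SetLike σ A]
    [AddSubmonoidClass σ A] (𝒜 : ι → σ) [Decomposition 𝒜] (k : ι) (x y : A) :
    (decompose 𝒜 (x + y) k : A) = decompose 𝒜 x k + decompose 𝒜 y k := by
  rw [decompose_add, DirectSum.add_apply, AddMemClass.coe_add]

section GradedRing

variable {A σ : Type*} [Semiring A] [SetLike σ A] [AddSubmonoidClass σ A] (𝒜 : ℕ → σ)
  [GradedRing 𝒜]

theorem coe_decompose_mul_zero (x y : A) :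
    (decompose 𝒜 (x * y) 0 : A) = decompose 𝒜 x 0 * decompose 𝒜 y 0 :=
  map_mul (GradedRing.projZeroRingHom 𝒜) x y

theorem coe_decompose_mul_one (x y : A) :
    (decompose 𝒜 (x * y) 1 : A) =
      decompose 𝒜 x 0 * decompose 𝒜 y 1 + decompose 𝒜 x 1 * decompose 𝒜 y 0 := by
  rw [decompose_mul, coe_mul_apply_eq_sum_antidiagonal, Finset.Nat.antidiagonal_succ]
  simp

end GradedRing

section GradedAlgebra

variable {R A : Type*} [CommSemiring R] [Semiring A] [Algebra R A] (𝒜 : ℕ → Submodule R A)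
  [GradedAlgebra 𝒜] {n : Type*} [Fintype n] [DecidableEq n]

theorem coe_decompose_algebraMap_zero (a : R) :
    (decompose 𝒜 (algebraMap R A a) 0 : A) = algebraMap R A a :=
  decompose_of_mem_same 𝒜 (SetLike.algebraMap_mem_graded 𝒜 a)

theorem coe_decompose_algebraMap_one (a : R) :
    (decompose 𝒜 (algebraMap R A a) 1 : A) = 0 :=
  decompose_of_mem_ne 𝒜 (SetLike.algebraMap_mem_graded 𝒜 a) zero_ne_one

theorem Matrix.algebraMap_apply_eq_algebraMap_diagonal (a : R) (i j : n) :
    algebraMap R (Matrix n n A) a i j = algebraMap R A (Matrix.diagonal (fun _ => a) i j) := by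
  rw [Matrix.algebraMap_matrix_apply, Matrix.diagonal_apply, apply_ite (algebraMap R A), map_zero]

variable {M : Matrix n n A} {lam : n → R}

theorem Matrix.coe_decompose_mul_apply_zero
    (hM : ∀ i j, (decompose 𝒜 (M i j) 0 : A) = algebraMap R A (Matrix.diagonal lam i j))
    {P : Matrix n n A} {mu : n → R}
    (hP : ∀ i j, (decompose 𝒜 (P i j) 0 : A) = algebraMap R A (Matrix.diagonal mu i j))
    (i j : n) :
    (decompose 𝒜 ((M * P) i j) 0 : A) =
      algebraMap R A (Matrix.diagonal (fun k => lam k * mu k) i j) := by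
  simp only [Matrix.mul_apply, ← GradedRing.proj_apply, map_sum]
  simp only [GradedRing.proj_apply, coe_decompose_mul_zero, hM, hP, ← map_mul, ← map_sum,
    ← Matrix.mul_apply, Matrix.diagonal_mul_diagonal]

theorem Matrix.coe_decompose_mul_apply_one
    (hM : ∀ i j, (decompose 𝒜 (M i j) 0 : A) = algebraMap R A (Matrix.diagonal lam i j))
    {P : Matrix n n A} {mu : n → R}
    (hP : ∀ i j, (decompose 𝒜 (P i j) 0 : A) = algebraMap R A (Matrix.diagonal mu i j))
    (i j : n) :
    (decompose 𝒜 ((M * P) i j) 1 : A) =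
      lam i • (decompose 𝒜 (P i j) 1 : A) + mu j • (decompose 𝒜 (M i j) 1 : A) := by
  simp only [Matrix.mul_apply, ← GradedRing.proj_apply, map_sum]
  simp only [GradedRing.proj_apply, coe_decompose_mul_one, hM, hP, Finset.sum_add_distrib]
  simp [Matrix.diagonal_apply, apply_ite (algebraMap R A), Algebra.smul_def, Algebra.commutes]

theorem coe_decompose_aeval_apply_zero
    (hM : ∀ i j, (decompose 𝒜 (M i j) 0 : A) = algebraMap R A (Matrix.diagonal lam i j))
    (p : R[X]) (i j : n) :
    (decompose 𝒜 (aeval M p i j) 0 : A) =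
      algebraMap R A (Matrix.diagonal (fun k => p.eval (lam k)) i j) := by
  induction p using Polynomial.induction_on generalizing i j with
  | C a =>
    rw [aeval_C, Matrix.algebraMap_apply_eq_algebraMap_diagonal, coe_decompose_algebraMap_zero]
    simp only [eval_C]
  | add p q hp hq =>
    rw [map_add, Matrix.add_apply, coe_decompose_add, hp, hq, ← map_add, ← Matrix.add_apply,
      Matrix.diagonal_add]
    simp only [eval_add]
  | monomial k a ih =>
    rw [show C a * X ^ (k + 1) = X * (C a * X ^ k) by ring, map_mul, aeval_X,
      Matrix.coe_decompose_mul_apply_zero 𝒜 hM ih]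
    simp only [eval_mul, eval_X]

theorem coe_decompose_aeval_apply_self_one
    (hM : ∀ i j, (decompose 𝒜 (M i j) 0 : A) = algebraMap R A (Matrix.diagonal lam i j))
    (p : R[X]) (i : n) :
    (decompose 𝒜 (aeval M p i i) 1 : A) =
      (derivative p).eval (lam i) • (decompose 𝒜 (M i i) 1 : A) := by
  induction p using Polynomial.induction_on with
  | C a =>
    rw [aeval_C, Matrix.algebraMap_apply_eq_algebraMap_diagonal, coe_decompose_algebraMap_one,
      derivative_C, eval_zero, zero_smul]
  | add p q hp hq =>
    rw [map_add, Matrix.add_apply, coe_decompose_add, hp, hq, derivative_add, eval_add, add_smul]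
  | monomial k a ih =>
    rw [show C a * X ^ (k + 1) = X * (C a * X ^ k) by ring, map_mul, aeval_X,
      Matrix.coe_decompose_mul_apply_one 𝒜 hM (coe_decompose_aeval_apply_zero 𝒜 hM _), ih,
      smul_smul, ← add_smul]
    simp only [derivative_mul, derivative_X, eval_add, eval_mul, eval_X, one_mul, add_comm]

end GradedAlgebra

theorem sub_smul_coe_decompose_aeval_apply_one {R A : Type*} [CommRing R] [Ring A] [Algebra R A]
    (𝒜 : ℕ → Submodule R A) [GradedAlgebra 𝒜] {n : Type*} [Fintype n] [DecidableEq n]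
    {M : Matrix n n A} {lam : n → R}
    (hM : ∀ i j, (decompose 𝒜 (M i j) 0 : A) = algebraMap R A (Matrix.diagonal lam i j))
    (p : R[X]) (i j : n) :
    (lam i - lam j) • (decompose 𝒜 (aeval M p i j) 1 : A) =
      (p.eval (lam i) - p.eval (lam j)) • (decompose 𝒜 (M i j) 1 : A) := by
  induction p using Polynomial.induction_on with
  | C a =>
    rw [aeval_C, Matrix.algebraMap_apply_eq_algebraMap_diagonal, coe_decompose_algebraMap_one,
      eval_C, eval_C, sub_self, smul_zero, zero_smul]
  | add p q hp hq =>
    rw [map_add, Matrix.add_apply, coe_decompose_add, smul_add, hp, hq, ← add_smul]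
    simp only [eval_add, add_sub_add_comm]
  | monomial k a ih =>
    rw [show C a * X ^ (k + 1) = X * (C a * X ^ k) by ring, map_mul, aeval_X,
      Matrix.coe_decompose_mul_apply_one 𝒜 hM (coe_decompose_aeval_apply_zero 𝒜 hM _),
      smul_add, smul_comm _ (lam i), ih, smul_smul, smul_smul, ← add_smul]
    congr 1
    simp only [eval_mul, eval_X]
    ring

open Polynomial in
theorem grassmann_cayley_hamilton_lemma_degree_one_general
    (R : Type*) [Field R] (m n : ℕ)
    (A : Matrix (Fin n) (Fin n) (ExteriorAlgebra R (Fin m → R)))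
    (lam : Fin n → R) (hlam : Function.Injective lam)
    (hA₀ : ∀ i j, (DirectSum.decompose (fun i : ℕ => ⋀[R]^i (Fin m → R)) (A i j) 0 :
        ExteriorAlgebra R (Fin m → R)) =
      algebraMap R _ (Matrix.diagonal lam i j))
    (v : Matrix (Fin n) (Fin n) (ExteriorAlgebra R (Fin m → R)))
    (hA₁ : ∀ i j, (DirectSum.decompose (fun i : ℕ => ⋀[R]^i (Fin m → R)) (A i j) 1 :
        ExteriorAlgebra R (Fin m → R)) = v i j)
    (f : R[X]) (hf : f = ∏ i, (X - C (lam i)))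
    (B : Matrix (Fin n) (Fin n) (ExteriorAlgebra R (Fin m → R)))
    (hB : B = Polynomial.aeval A f) :
    (fun r s => (DirectSum.decompose (fun i : ℕ => ⋀[R]^i (Fin m → R)) (B r s) 1 :
        ExteriorAlgebra R (Fin m → R))) =
      Matrix.diagonal (fun i =>
        algebraMap R _ ((Polynomial.derivative f).eval (lam i)) * v i i) := by
  have hf_root (i : Fin n) : f.eval (lam i) = 0 := by
    rw [hf, eval_prod]
    exact Finset.prod_eq_zero (Finset.mem_univ i) (by rw [eval_sub, eval_X, eval_C, sub_self])
  subst hB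
  funext r s
  rcases eq_or_ne r s with rfl | hrs
  · rw [Matrix.diagonal_apply_eq, coe_decompose_aeval_apply_self_one _ hA₀, hA₁,
      Algebra.smul_def]
  · have h := sub_smul_coe_decompose_aeval_apply_one _ hA₀ f r s
    rw [hf_root, hf_root, sub_self, zero_smul, smul_eq_zero] at h
    rw [Matrix.diagonal_apply_ne _ hrs]
    exact h.resolve_left (sub_ne_zero.2 (hlam.ne hrs))

open Polynomial in
/-- If `A₀ = diag(λ₁, …, λₙ)` has pairwise distinct diagonal entries, `A₁ = (vᵢⱼ)`
with `vᵢⱼ` of degree 1, and `B = f(A)` where `f` is the characteristic polynomial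
of `A₀`, then the degree-one component of `B` is `diag(f'(λ₁)v₁₁, …, f'(λₙ)vₙₙ)`. -/
theorem grassmann_cayley_hamilton_lemma_degree_one
    (R : Type*) [Field R] (m n : ℕ)
    (A : Matrix (Fin n) (Fin n) (ExteriorAlgebra R (Fin m → R)))
    (lam : Fin n → R) (hlam : Function.Injective lam)
    (hA₀ : ∀ i j, (DirectSum.decompose (fun i : ℕ => ⋀[R]^i (Fin m → R)) (A i j) 0 :
        ExteriorAlgebra R (Fin m → R)) =
      algebraMap R _ (Matrix.diagonal lam i j))
    (v : Matrix (Fin n) (Fin n) (ExteriorAlgebra R (Fin m → R)))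
    (hv : ∀ i j, v i j ∈ ⋀[R]^1 (Fin m → R))
    (hA₁ : ∀ i j, (DirectSum.decompose (fun i : ℕ => ⋀[R]^i (Fin m → R)) (A i j) 1 :
        ExteriorAlgebra R (Fin m → R)) = v i j)
    (f : R[X]) (hf : f = ∏ i, (X - C (lam i)))
    (B : Matrix (Fin n) (Fin n) (ExteriorAlgebra R (Fin m → R)))
    (hB : B = Polynomial.aeval A f) :
    (fun r s => (DirectSum.decompose (fun i : ℕ => ⋀[R]^i (Fin m → R)) (B r s) 1 :
        ExteriorAlgebra R (Fin m → R))) =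
      Matrix.diagonal (fun i =>
        algebraMap R _ ((Polynomial.derivative f).eval (lam i)) * v i i) :=
  grassmann_cayley_hamilton_lemma_degree_one_general R m n A lam hlam hA₀ v hA₁ f hf B hB
end

section
/- Let R be a field, and let A ∈ M_n E^m have degree-zero component A₀ = diag(λ₁,…,λ_n) with pairwise distinct λ_i ∈ R, and degree-one component A₁ = (v_{ij}) with v_{ij} ∈ E^m_1. Let f(x) = ∏_{i=1}^n (x − λ_i), B = f(A), and let B₁, B₂ be the degree-one and degree-two components of B. Write B₂ = B₂⁺ + B₂⁻ where B₂⁺ is the diagonal part and B₂⁻ is the off-diagonal part of B₂. Then B₁ B₂⁺ = B₂⁺ B₁ and B₁ B₂⁻ = − B₂⁻ B₁. -/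
/-!
`B = f(A)` commutes with `A`, and its degree-zero part is `f(A₀) = f(diag λ) = 0`. Comparing the
degree-one and degree-two parts of `AB = BA` therefore gives `[A₀, B₁] = 0` and
`[A₀, B₂] = B₁A₁ - A₁B₁`. As the `λᵢ` are distinct, the first makes `B₁ = diag(b)` diagonal, and the
second reads `(λᵣ - λₛ) B₂ᵣₛ = bᵣ vᵣₛ - vᵣₛ bₛ`. The diagonal claim is then the commutation of odd
elements with even ones, and the off-diagonal claim follows from `bᵣ² = bₛ² = 0`, because
`x (xz - zy) + (xz - zy) y = 0` whenever `x² = y² = 0`.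
-/

open Polynomial DirectSum Finset Matrix

section GradedRing

variable {ι A σ : Type*} [DecidableEq ι] [AddMonoid ι] [HasAntidiagonal ι] [Semiring A]
  [SetLike σ A] [AddSubmonoidClass σ A] (𝒜 : ι → σ) [GradedRing 𝒜]

theorem DirectSum.coe_decompose_mul_eq_sum_antidiagonal (a b : A) (k : ι) :
    (decompose 𝒜 (a * b) k : A) =
      ∑ ij ∈ antidiagonal k, (decompose 𝒜 a ij.1 : A) * decompose 𝒜 b ij.2 := by
  rw [decompose_mul, coe_mul_apply_eq_sum_antidiagonal]

theorem Matrix.map_proj_mul {l m n : Type*} [Fintype m] (M : Matrix l m A) (N : Matrix m n A)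
    (k : ι) :
    (M * N).map (GradedRing.proj 𝒜 k) =
      ∑ ij ∈ antidiagonal k, M.map (GradedRing.proj 𝒜 ij.1) * N.map (GradedRing.proj 𝒜 ij.2) := by
  ext r s
  simp only [map_apply, mul_apply, sum_apply, map_sum, GradedRing.proj_apply,
    coe_decompose_mul_eq_sum_antidiagonal]
  exact Finset.sum_comm

end GradedRing

section LowDegree

variable {A σ : Type*} [Semiring A] [SetLike σ A] [AddSubmonoidClass σ A] (𝒜 : ℕ → σ)
  [GradedRing 𝒜] {n : Type*} [Fintype n] [DecidableEq n] {M N : Matrix n n A}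

theorem Matrix.commute_map_proj_zero_one (hMN : Commute M N)
    (hN : N.map (GradedRing.proj 𝒜 0) = 0) :
    Commute (M.map (GradedRing.proj 𝒜 0)) (N.map (GradedRing.proj 𝒜 1)) := by
  have h := congrArg (·.map (GradedRing.proj 𝒜 1)) hMN.eq
  simpa [Commute, SemiconjBy, map_proj_mul, Nat.sum_antidiagonal_succ, hN] using h

theorem Matrix.map_proj_two_of_commute (hMN : Commute M N)
    (hN : N.map (GradedRing.proj 𝒜 0) = 0) :
    M.map (GradedRing.proj 𝒜 0) * N.map (GradedRing.proj 𝒜 2) +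
        M.map (GradedRing.proj 𝒜 1) * N.map (GradedRing.proj 𝒜 1) =
      N.map (GradedRing.proj 𝒜 1) * M.map (GradedRing.proj 𝒜 1) +
        N.map (GradedRing.proj 𝒜 2) * M.map (GradedRing.proj 𝒜 0) := by
  have h := congrArg (·.map (GradedRing.proj 𝒜 2)) hMN.eq
  simpa [map_proj_mul, Nat.sum_antidiagonal_succ, hN] using h

end LowDegree

section GradedAlgebra

variable {ι R A : Type*} [DecidableEq ι] [AddCommMonoid ι] [PartialOrder ι]
  [CanonicallyOrderedAdd ι] [CommSemiring R] [Semiring A] [Algebra R A]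
  (𝒜 : ι → Submodule R A) [GradedAlgebra 𝒜]

def GradedAlgebra.projZeroAlgHom : A →ₐ[R] A :=
  { GradedRing.projZeroRingHom 𝒜 with
    commutes' := fun r => decompose_of_mem_same 𝒜 (SetLike.algebraMap_mem_graded 𝒜 r) }

theorem Matrix.map_proj_zero_aeval {n : Type*} [Fintype n] [DecidableEq n] (M : Matrix n n A)
    (f : R[X]) :
    (aeval M f).map (GradedRing.proj 𝒜 0) = aeval (M.map (GradedRing.proj 𝒜 0)) f :=
  (aeval_algHom_apply (GradedAlgebra.projZeroAlgHom 𝒜).mapMatrix M f).symm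

end GradedAlgebra

section MatrixAeval

variable {n R E : Type*} [Fintype n] [DecidableEq n] [CommSemiring R] [Semiring E] [Algebra R E]

theorem Matrix.aeval_diagonal (d : n → R) (f : R[X]) :
    aeval (diagonal d) f = diagonal fun i => f.eval (d i) := by
  rw [← diagonalAlgHom_apply (R := R), aeval_algHom_apply, aeval_pi]
  rfl

theorem Matrix.aeval_map_algebraMap (M : Matrix n n R) (f : R[X]) :
    aeval (M.map (algebraMap R E)) f = (aeval M f).map (algebraMap R E) :=
  aeval_algHom_apply (Algebra.ofId R E).mapMatrix M f

end MatrixAeval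

section ScalarDiagonal

variable {n R E : Type*} [Fintype n] [DecidableEq n] [CommRing R] [Ring E] [Algebra R E]

theorem Matrix.aeval_diagonal_prod_X_sub_C (d : n → R) :
    aeval (diagonal d) (∏ i, (X - C (d i)) : R[X]) = 0 := by
  rw [aeval_diagonal, ← diagonal_zero]
  congr 1
  funext i
  simp [eval_prod, prod_eq_zero (mem_univ i)]

theorem Matrix.diagonal_map_algebraMap_mul_sub_mul_apply (d : n → R) (M : Matrix n n E)
    (i j : n) :
    ((diagonal d).map (algebraMap R E) * M - M * (diagonal d).map (algebraMap R E)) i j =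
      (d i - d j) • M i j := by
  rw [diagonal_map (map_zero _), sub_apply, diagonal_mul, mul_diagonal, sub_smul,
    Algebra.smul_def, Algebra.smul_def, Algebra.commutes (d j)]

theorem Matrix.IsDiag.of_commute_diagonal_map_algebraMap [IsDomain R]
    [Module.IsTorsionFree R E] {d : n → R} (hd : Function.Injective d) {M : Matrix n n E}
    (h : Commute ((diagonal d).map (algebraMap R E)) M) : M.IsDiag := by
  intro i j hij
  have := diagonal_map_algebraMap_mul_sub_mul_apply d M i j
  rw [h.eq, sub_self, zero_apply, eq_comm, smul_eq_zero, sub_eq_zero] at this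
  exact this.resolve_left (hd.ne hij)

end ScalarDiagonal

theorem mul_eq_neg_mul_of_smul_eq_mul_sub_mul {R E : Type*} [CommRing R] [IsDomain R] [Ring E]
    [Algebra R E] [Module.IsTorsionFree R E] {x y z w : E} {c : R} (hc : c ≠ 0) (hx : x * x = 0) (hy : y * y = 0)
    (hw : c • w = x * z - z * y) : x * w = -(w * y) := by
  have key : x * (x * z - z * y) + (x * z - z * y) * y = 0 := by
    rw [mul_sub, sub_mul, ← mul_assoc, hx, mul_assoc z, hy]
    noncomm_ring
  rw [← hw, mul_smul_comm, smul_mul_assoc, ← smul_add, smul_eq_zero] at key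
  exact eq_neg_of_add_eq_zero_left (key.resolve_left hc)

namespace ExteriorAlgebra

variable {R M : Type*} [CommRing R] [AddCommGroup M] [Module R M]

theorem mul_self_eq_zero_of_mem_one {x : ExteriorAlgebra R M} (hx : x ∈ ⋀[R]^1 M) :
    x * x = 0 := by
  rw [exteriorPower, pow_one] at hx
  obtain ⟨u, rfl⟩ := hx
  exact ι_sq_zero u

theorem mul_eq_neg_mul_of_mem_one {x y : ExteriorAlgebra R M} (hx : x ∈ ⋀[R]^1 M)
    (hy : y ∈ ⋀[R]^1 M) : y * x = -(x * y) := by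
  rw [exteriorPower, pow_one] at hx hy
  obtain ⟨u, rfl⟩ := hx
  obtain ⟨w, rfl⟩ := hy
  exact eq_neg_of_add_eq_zero_left (ι_add_mul_swap w u)

theorem mul_eq_neg_one_pow_zsmul_mul {x z : ExteriorAlgebra R M} (hx : x ∈ ⋀[R]^1 M) {k : ℕ}
    (hz : z ∈ ⋀[R]^k M) : z * x = (-1 : ℤ) ^ k • (x * z) := by
  induction k generalizing z with
  | zero =>
    rw [exteriorPower, pow_zero, Submodule.mem_one] at hz
    obtain ⟨r, rfl⟩ := hz
    rw [pow_zero, one_zsmul, Algebra.commutes]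
  | succ k ih =>
    rw [exteriorPower, pow_succ] at hz
    refine Submodule.mul_induction_on hz (fun a ha b hb => ?_) (fun z₁ z₂ h₁ h₂ => ?_)
    · rw [mul_assoc, mul_eq_neg_mul_of_mem_one hx (by rwa [exteriorPower, pow_one]), mul_neg,
        ← mul_assoc, ih ha, pow_succ, mul_neg_one, neg_zsmul, smul_mul_assoc, mul_assoc]
    · rw [add_mul, h₁, h₂, mul_add, smul_add]

theorem commute_of_mem_one_of_mem_two {x z : ExteriorAlgebra R M} (hx : x ∈ ⋀[R]^1 M)
    (hz : z ∈ ⋀[R]^2 M) : Commute x z := by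
  rw [Commute, SemiconjBy, mul_eq_neg_one_pow_zsmul_mul hx hz]
  norm_num

end ExteriorAlgebra

open Polynomial in
theorem grassmann_cayley_hamilton_lemma_commutation_general
    (R : Type*) [Field R] (m n : ℕ)
    (A : Matrix (Fin n) (Fin n) (ExteriorAlgebra R (Fin m → R)))
    (lam : Fin n → R) (hlam : Function.Injective lam)
    (hA₀ : ∀ i j, (DirectSum.decompose (fun i : ℕ => ⋀[R]^i (Fin m → R)) (A i j) 0 :
        ExteriorAlgebra R (Fin m → R)) =
      algebraMap R _ (Matrix.diagonal lam i j))
    (f : R[X]) (hf : f = ∏ i, (X - C (lam i)))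
    (B : Matrix (Fin n) (Fin n) (ExteriorAlgebra R (Fin m → R)))
    (hB : B = Polynomial.aeval A f)
    (B₁ B₂ B₂p B₂m : Matrix (Fin n) (Fin n) (ExteriorAlgebra R (Fin m → R)))
    (hB₁ : ∀ r s, B₁ r s =
      (DirectSum.decompose (fun i : ℕ => ⋀[R]^i (Fin m → R)) (B r s) 1 :
        ExteriorAlgebra R (Fin m → R)))
    (hB₂ : ∀ r s, B₂ r s =
      (DirectSum.decompose (fun i : ℕ => ⋀[R]^i (Fin m → R)) (B r s) 2 :
        ExteriorAlgebra R (Fin m → R)))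
    (hB₂p : B₂p = Matrix.diagonal (fun i => B₂ i i))
    (hB₂m : B₂m = B₂ - B₂p) :
    B₁ * B₂p = B₂p * B₁ ∧ B₁ * B₂m = -(B₂m * B₁) := by
  set 𝒜 := fun i : ℕ => ⋀[R]^i (Fin m → R)
  have hA₀' : A.map (GradedRing.proj 𝒜 0) = (diagonal lam).map (algebraMap R _) := ext hA₀
  have hB₁' : B₁ = B.map (GradedRing.proj 𝒜 1) := ext hB₁
  have hB₂' : B₂ = B.map (GradedRing.proj 𝒜 2) := ext hB₂
  have hB₀ : B.map (GradedRing.proj 𝒜 0) = 0 := by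
    rw [hB, hf, map_proj_zero_aeval, hA₀', Matrix.aeval_map_algebraMap,
      aeval_diagonal_prod_X_sub_C, Matrix.map_zero _ (map_zero _)]
  have hAB : Commute A B := hB ▸ by simpa using (commute_X f).map (aeval A)
  have hB₁diag : B₁.IsDiag := hB₁' ▸ IsDiag.of_commute_diagonal_map_algebraMap hlam
    (hA₀' ▸ commute_map_proj_zero_one 𝒜 hAB hB₀)
  have hB₂lam : ∀ r s, (lam r - lam s) • B₂ r s =
      B₁ r r * A.map (GradedRing.proj 𝒜 1) r s - A.map (GradedRing.proj 𝒜 1) r s * B₁ s s := by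
    intro r s
    rw [← diagonal_map_algebraMap_mul_sub_mul_apply, ← hA₀', hB₂',
      sub_eq_sub_iff_add_eq_add.mpr (map_proj_two_of_commute 𝒜 hAB hB₀), ← hB₁',
      ← hB₁diag.diagonal_diag, Matrix.sub_apply, diagonal_mul, mul_diagonal, diagonal_apply_eq,
      diagonal_apply_eq]
  have hodd : ∀ i, B₁ i i ∈ ⋀[R]^1 (Fin m → R) := fun i => hB₁ i i ▸ SetLike.coe_mem _
  rw [← hB₁diag.diagonal_diag]
  constructor
  · rw [hB₂p, diagonal_mul_diagonal, diagonal_mul_diagonal]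
    congr 1
    funext i
    exact ExteriorAlgebra.commute_of_mem_one_of_mem_two (hodd i) (hB₂ i i ▸ SetLike.coe_mem _)
  · ext r s
    rw [Matrix.neg_apply, diagonal_mul, mul_diagonal, hB₂m, hB₂p, Matrix.sub_apply]
    obtain rfl | hrs := eq_or_ne r s
    · simp
    · rw [diagonal_apply_ne _ hrs, sub_zero]
      exact mul_eq_neg_mul_of_smul_eq_mul_sub_mul (sub_ne_zero.2 (hlam.ne hrs))
        (ExteriorAlgebra.mul_self_eq_zero_of_mem_one (hodd r))
        (ExteriorAlgebra.mul_self_eq_zero_of_mem_one (hodd s)) (hB₂lam r s)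

open Polynomial in
/-- If `A₀ = diag(λ₁, …, λₙ)` has pairwise distinct diagonal entries, `A₁ = (vᵢⱼ)` with
`vᵢⱼ` of degree 1, `B = f(A)` where `f` is the characteristic polynomial of `A₀`, and
`B₁`, `B₂` are the degree-one and degree-two components of `B`, with `B₂⁺` and `B₂⁻`
the diagonal and off-diagonal parts of `B₂`, then `B₁` commutes with `B₂⁺` and
anticommutes with `B₂⁻`. -/
theorem grassmann_cayley_hamilton_lemma_commutation
    (R : Type*) [Field R] (m n : ℕ)
    (A : Matrix (Fin n) (Fin n) (ExteriorAlgebra R (Fin m → R)))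
    (lam : Fin n → R) (hlam : Function.Injective lam)
    (hA₀ : ∀ i j, (DirectSum.decompose (fun i : ℕ => ⋀[R]^i (Fin m → R)) (A i j) 0 :
        ExteriorAlgebra R (Fin m → R)) =
      algebraMap R _ (Matrix.diagonal lam i j))
    (v : Matrix (Fin n) (Fin n) (ExteriorAlgebra R (Fin m → R)))
    (hv : ∀ i j, v i j ∈ ⋀[R]^1 (Fin m → R))
    (hA₁ : ∀ i j, (DirectSum.decompose (fun i : ℕ => ⋀[R]^i (Fin m → R)) (A i j) 1 :
        ExteriorAlgebra R (Fin m → R)) = v i j)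
    (f : R[X]) (hf : f = ∏ i, (X - C (lam i)))
    (B : Matrix (Fin n) (Fin n) (ExteriorAlgebra R (Fin m → R)))
    (hB : B = Polynomial.aeval A f)
    (B₁ B₂ B₂p B₂m : Matrix (Fin n) (Fin n) (ExteriorAlgebra R (Fin m → R)))
    (hB₁ : ∀ r s, B₁ r s =
      (DirectSum.decompose (fun i : ℕ => ⋀[R]^i (Fin m → R)) (B r s) 1 :
        ExteriorAlgebra R (Fin m → R)))
    (hB₂ : ∀ r s, B₂ r s =
      (DirectSum.decompose (fun i : ℕ => ⋀[R]^i (Fin m → R)) (B r s) 2 :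
        ExteriorAlgebra R (Fin m → R)))
    (hB₂p : B₂p = Matrix.diagonal (fun i => B₂ i i))
    (hB₂m : B₂m = B₂ - B₂p) :
    B₁ * B₂p = B₂p * B₁ ∧ B₁ * B₂m = -(B₂m * B₁) :=
  grassmann_cayley_hamilton_lemma_commutation_general R m n A lam hlam hA₀ f hf B hB B₁ B₂ B₂p B₂m
    hB₁ hB₂ hB₂p hB₂m
end

section
/- Let 𝔄 be a ring with multiplicative identity 1 and let k ≥ 1. If 𝔄 satisfies the Capelli identity of x-degree k, then 𝔄 satisfies the standard identity of degree 2⌊k/2⌋; that is, for all x₁,…,x_{2⌊k/2⌋} ∈ 𝔄, Σ_{π ∈ 𝔖_{2⌊k/2⌋}} sign(π) x_{π(1)} ⋯ x_{π(2⌊k/2⌋)} = 0. -/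
/-- The standard polynomial sum of degree `n`. -/
def stdS (A : Type*) [Ring A] (n : ℕ) (x : Fin n → A) : A :=
  ∑ π : Equiv.Perm (Fin n), (Equiv.Perm.sign π : ℤ) • (List.ofFn fun i => x (π i)).prod

lemma stdS_comp (A : Type*) [Ring A] (n : ℕ) (x : Fin n → A) (τ : Equiv.Perm (Fin n)) :
    stdS A n (fun i => x (τ i)) = (Equiv.Perm.sign τ : ℤ) • stdS A n x := by
  unfold stdS
  rw [Finset.smul_sum]
  refine Fintype.sum_equiv (Equiv.mulLeft τ) _ _ fun π => ?_
  simp only [Equiv.coe_mulLeft, Equiv.Perm.mul_apply, smul_smul, Equiv.Perm.sign_mul,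
    Units.val_mul]
  congr 1
  rcases Int.units_eq_one_or (Equiv.Perm.sign τ) with h | h <;> simp [h]

lemma stdS_rec (A : Type*) [Ring A] (n : ℕ) (x : Fin (n + 1) → A) :
    stdS A (n + 1) x = ∑ p : Fin (n + 1),
      (if p = 0 then (1 : ℤ) else -1) •
        (x p * stdS A n (fun i => x (Equiv.swap 0 p i.succ))) := by
  unfold stdS
  rw [← Equiv.Perm.decomposeFin.symm.sum_comp, Fintype.sum_prod_type]
  refine Finset.sum_congr rfl fun p _ => ?_
  rw [Finset.mul_sum, Finset.smul_sum]
  refine Finset.sum_congr rfl fun e _ => ?_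
  rw [Equiv.Perm.decomposeFin.symm_sign, List.ofFn_succ]
  simp only [Equiv.Perm.decomposeFin_symm_apply_zero, Equiv.Perm.decomposeFin_symm_apply_succ,
    List.prod_cons, Units.val_mul, mul_smul_comm, smul_smul]
  rcases eq_or_ne p 0 with h | h <;> simp [h]

lemma swap_succ (n : ℕ) (q : Fin (n + 1)) (i : Fin (n + 1)) :
    Equiv.swap (0 : Fin (n + 2)) q.succ i.succ = (q.succ).succAbove (q.cycleRange i) := by
  rcases lt_trichotomy i q with h | h | h
  · rw [Fin.cycleRange_of_lt h, Equiv.swap_apply_of_ne_of_ne (Fin.succ_ne_zero i)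
      (fun hc => h.ne (Fin.succ_injective _ hc)), Fin.succAbove_of_castSucc_lt]
    · ext
      simp [Fin.val_add_one_of_lt (h.trans_le (Fin.le_last q))]
    · rw [Fin.castSucc_lt_succ_iff, Fin.le_def, Fin.val_add_one_of_lt (h.trans_le (Fin.le_last q))]
      exact h
  · subst h
    rw [Fin.cycleRange_self, Equiv.swap_apply_right, Fin.succAbove_of_castSucc_lt] <;>
      simp [Fin.succ_pos]
  · rw [Fin.cycleRange_of_gt h, Equiv.swap_apply_of_ne_of_ne (Fin.succ_ne_zero i)
      (fun hc => h.ne' (Fin.succ_injective _ hc)), Fin.succAbove_of_le_castSucc]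
    rw [Fin.succ_le_castSucc_iff]
    exact h

lemma stdS_expand {A : Type*} [Ring A] (n : ℕ) (x : Fin (n + 1) → A) :
    stdS A (n + 1) x = ∑ p : Fin (n + 1),
      ((-1 : ℤ) ^ (p : ℕ)) • (x p * stdS A n (fun i => x (p.succAbove i))) := by
  rw [stdS_rec]
  refine Finset.sum_congr rfl fun p _ => ?_
  induction p using Fin.cases with
  | zero => simp [Fin.succAbove_zero]
  | succ q =>
    cases n with
    | zero => exact q.elim0
    | succ m =>
      have hx : (fun i => x (Equiv.swap 0 q.succ i.succ))
          = fun i => (fun j => x ((q.succ).succAbove j)) (q.cycleRange i) := by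
        funext i; rw [swap_succ]
      have hc := stdS_comp A (m + 1) (fun j => x ((q.succ).succAbove j)) q.cycleRange
      rw [hx, hc, Fin.sign_cycleRange]
      simp only [Fin.succ_ne_zero, if_neg, ite_false, Fin.val_succ, pow_succ, mul_smul_comm,
        smul_smul]
      push_cast
      ring_nf

lemma stdS_cons_one {A : Type*} [Ring A] : ∀ (n : ℕ) (x : Fin n → A),
    stdS A (n + 1) (Fin.cons 1 x) = (if Even n then (1 : ℤ) else 0) • stdS A n x := by
  intro n
  induction n with
  | zero =>
    intro x
    rw [stdS_rec]
    have hx : (fun i : Fin 0 => (Fin.cons (1 : A) x : Fin 1 → A) (Equiv.swap 0 0 i.succ)) = x :=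
      funext fun i => i.elim0
    simp [hx]
  | succ n ih =>
    intro x
    have hterm : ∀ q : Fin (n + 1),
        (if q.succ = 0 then (1 : ℤ) else -1) •
          ((Fin.cons 1 x : Fin (n + 2) → A) q.succ *
            stdS A (n + 1)
              (fun i => (Fin.cons 1 x : Fin (n + 2) → A) (Equiv.swap 0 q.succ i.succ)))
        = (-(if Even n then (1 : ℤ) else 0)) •
            (((-1 : ℤ) ^ (q : ℕ)) • (x q * stdS A n (fun i => x (q.succAbove i)))) := by
      intro q
      have hx2 : (fun i => (Fin.cons (1 : A) x : Fin (n + 2) → A) (Equiv.swap 0 q.succ i.succ))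
          = fun i => (Fin.cons (1 : A) (fun j => x (q.succAbove j)) :
              Fin (n + 1) → A) (q.cycleRange i) := by
        funext i
        rw [swap_succ]
        generalize q.cycleRange i = j
        induction j using Fin.cases with
        | zero => simp [Fin.succ_succAbove_zero]
        | succ t => simp [Fin.succ_succAbove_succ]
      have hc := stdS_comp A (n + 1) (Fin.cons (1 : A) (fun j => x (q.succAbove j))) q.cycleRange
      rw [hx2, hc, Fin.sign_cycleRange, ih]
      simp only [Fin.succ_ne_zero, if_false, Fin.cons_succ, smul_smul, mul_smul_comm]
      congr 1
      push_cast
      ring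
    rw [stdS_rec, Fin.sum_univ_succ, Finset.sum_congr rfl (fun q _ => hterm q),
      ← Finset.smul_sum, ← stdS_expand]
    have h0 : (fun i => (Fin.cons (1 : A) x : Fin (n + 2) → A) (Equiv.swap 0 0 i.succ)) = x := by
      funext i; simp
    rw [h0]
    simp only [if_pos rfl, Fin.cons_zero, one_smul, one_mul]
    rcases Nat.even_or_odd n with he | ho
    · simp [he, Nat.even_add_one, he.add_one]
    · simp [Nat.not_even_iff_odd.mpr ho, Nat.even_add_one]

lemma stdS_down (A : Type*) [Ring A] (k : ℕ) (hS : ∀ x : Fin k → A, stdS A k x = 0)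
    (x : Fin (2 * (k / 2)) → A) : stdS A (2 * (k / 2)) x = 0 := by
  rcases Nat.even_or_odd k with he | ho
  · obtain ⟨m, rfl⟩ := he
    have e : 2 * ((m + m) / 2) = m + m := by omega
    revert x
    rw [e]
    exact hS
  · obtain ⟨m, rfl⟩ := ho
    have e : 2 * ((2 * m + 1) / 2) = 2 * m := by omega
    revert x
    rw [e]
    intro x
    have h1 := stdS_cons_one (2 * m) x
    rw [hS (Fin.cons 1 x)] at h1
    simpa [(even_two_mul m)] using h1.symm

/-- If a unital ring satisfies the Capelli identity of `x`-degree `k ≥ 1`, then it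
satisfies the standard identity of degree `2⌊k/2⌋`. -/
theorem capelli_identity_implies_standard_identity
    (A : Type*) [Ring A] (k : ℕ) (hk : 1 ≤ k)
    (hcap : ∀ (x : Fin k → A) (y : Fin (k + 1) → A),
      ∑ π : Equiv.Perm (Fin k),
        (Equiv.Perm.sign π : ℤ) •
          (y 0 * (List.ofFn fun i : Fin k => x (π i) * y i.succ).prod) = 0)
    (x : Fin (2 * (k / 2)) → A) :
    ∑ π : Equiv.Perm (Fin (2 * (k / 2))),
      (Equiv.Perm.sign π : ℤ) • (List.ofFn fun i => x (π i)).prod = 0 := by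
  have hS : ∀ x : Fin k → A, stdS A k x = 0 := by
    intro x
    simpa [stdS, mul_one, one_mul] using hcap x (fun _ => 1)
  exact stdS_down A k hS x
end
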